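/- The pair of maps (L, Adh) establishes a bijective correspondence between central languages over A (languages L with C(L) = L) and subshifts over A; likewise (L_c, Adh) establishes a bijective correspondence between cyclic languages (languages L with C_c(L) = L) and cyclic subshifts over A. -/

import Mathlib

/-- The (right) shift map on bi-infinite sequences: `(σ s)_i = s_{i+1}`. -/
def shft {α : Type} : (ℤ → α) → (ℤ → α) := fun s i => s (i + 1)

/-- A finite word `a` is a segment of the bi-infinite sequence `s`. -/
def IsSegment {A : Type} (a : List A) (s : ℤ → A) : Prop :=
  ∃ l : ℤ, ∀ j : Fin a.length, s (l + ((j : ℕ) : ℤ)) = a.get j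

/-- The central language of a set of sequences: all segments of its members. -/
def lang {A : Type} (S : Set (ℤ → A)) : Set (List A) :=
  {a | ∃ s ∈ S, IsSegment a s}

/-- The periodization of a nonempty word: `s̄_i = s_{i mod |s|}`. -/
def periodize {A : Type} (a : List A) (ha : a ≠ []) : ℤ → A := fun i =>
  a.get ⟨(i % (a.length : ℤ)).toNat, by
    have h0 : 0 < (a.length : ℤ) := by
      exact_mod_cast List.length_pos_iff.mpr ha
    have h1 : 0 ≤ i % (a.length : ℤ) := Int.emod_nonneg i (by omega)
    have h2 : i % (a.length : ℤ) < (a.length : ℤ) := Int.emod_lt_of_pos i h0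
    omega⟩

/-- The σ-periodic points of `S`: `Per(σ,S)`. -/
def PerSet {A : Type} (S : Set (ℤ → A)) : Set (ℤ → A) :=
  {s ∈ S | ∃ n : ℕ, 0 < n ∧ ∀ i : ℤ, s (i + (n : ℤ)) = s i}

/-- The cyclic language `L_c(S) = ζ⁻¹(Per(σ,S)) ∪ {ε}`. -/
def Lc {A : Type} (S : Set (ℤ → A)) : Set (List A) :=
  {a | ∃ ha : a ≠ [], periodize a ha ∈ PerSet S} ∪ {[]}

/-- The adherence of a language: sequences all of whose segments occur in words of `L`. -/
def Adh {A : Type} (L : Set (List A)) : Set (ℤ → A) :=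
  {s | ∀ a : List A, IsSegment a s → ∃ w ∈ L, a <:+: w}

/-- The center `C(L)`: bi-extensible words of `L`. -/
def Ctr {A : Type} (L : Set (List A)) : Set (List A) :=
  {a | ∀ N : ℕ, 0 < N → ∃ x y : List A,
    N ≤ x.length ∧ N ≤ y.length ∧ x ++ a ++ y ∈ L}

/-- The cyclic center `C_c(L)`: words all of whose repetitions' cyclic permutations
extend to words of `L` (together with the empty word, by convention). -/
def Cc {A : Type} (L : Set (List A)) : Set (List A) :=
  {a | a = [] ∨ (a ≠ [] ∧ ∀ i : ℕ, 0 < i → ∀ u v : List A,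
    u ++ v = List.flatten (List.replicate i a) →
    ∃ x y : List A, x ++ (v ++ u) ++ y ∈ L)}

/-- A subshift: a closed shift-invariant subset of `A^ℤ`. -/
def IsSubshift {A : Type} [TopologicalSpace A] (S : Set (ℤ → A)) : Prop :=
  IsClosed S ∧ shft '' S = S

/-- A cyclic subshift: a subshift whose σ-periodic points are dense. -/
def IsCyclicSubshift {A : Type} [TopologicalSpace A] (S : Set (ℤ → A)) : Prop :=
  IsSubshift S ∧ S ⊆ closure (PerSet S)


/-!
Over a finite alphabet, `lang (Adh L) = Ctr L` for every language `L`: a word with arbitrarily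
long two-sided extensions in `L` lies on a point of `Adh L`, by compactness of `A^ℤ`. Dually,
a closed shift-invariant set contains every sequence each of whose windows occurs in it, so
`Adh (lang S) = S` for a subshift. The cyclic correspondence runs in parallel: the segments of
the periodization of `a` are exactly the factors of the rotations of the powers of `a`, which
gives `Lc (Adh L) = Cc L`, and `Adh (Lc S)` is the closure of the periodic points of a
shift-invariant `S`. The four claims are immediate from these identities.
-/

open Function

section Window

variable {A : Type}

def window (s : ℤ → A) (l : ℤ) (m : ℕ) : List A :=
  List.ofFn fun j : Fin m => s (l + j)

@[simp]
lemma length_window (s : ℤ → A) (l : ℤ) (m : ℕ) : (window s l m).length = m :=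
  List.length_ofFn

lemma window_eq_window_iff {s t : ℤ → A} {l l' : ℤ} {m : ℕ} :
    window s l m = window t l' m ↔ ∀ j < m, s (l + j) = t (l' + j) := by
  simp only [window, List.ofFn_inj, funext_iff, Fin.forall_iff]

lemma window_add (s : ℤ → A) (l : ℤ) (m n : ℕ) :
    window s l (m + n) = window s l m ++ window s (l + m) n := by
  simp only [window, List.ofFn_add]
  congr 2
  funext j
  simp [add_assoc]

lemma window_shift (s : ℤ → A) (k l : ℤ) (m : ℕ) :
    window (fun i => s (i + k)) l m = window s (l + k) m :=
  window_eq_window_iff.2 fun j _ => by ring_nf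

lemma window_add_eq_append_iff {s : ℤ → A} {l : ℤ} {x y : List A} :
    window s l (x ++ y).length = x ++ y ↔
      window s l x.length = x ∧ window s (l + x.length) y.length = y := by
  rw [List.length_append, window_add]
  exact ⟨fun h => List.append_inj h (by simp), fun ⟨hx, hy⟩ => by rw [hx, hy]⟩

lemma window_infix (s : ℤ → A) {l l' : ℤ} {m m' : ℕ} (hl : l' ≤ l)
    (hm : l + m ≤ l' + m') : window s l m <:+: window s l' m' := by
  obtain ⟨d, rfl⟩ : ∃ d : ℕ, l = l' + d := ⟨(l - l').toNat, by omega⟩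
  obtain ⟨e, rfl⟩ : ∃ e : ℕ, m' = d + m + e := ⟨m' - d - m, by omega⟩
  rw [window_add, window_add]
  exact ⟨_, _, rfl⟩

lemma isSegment_iff_window {a : List A} {s : ℤ → A} :
    IsSegment a s ↔ ∃ l, window s l a.length = a := by
  conv_rhs => enter [1, l, 2]; rw [← List.ofFn_get a]
  simp only [IsSegment, window, List.ofFn_inj, funext_iff]

lemma isSegment_window (s : ℤ → A) (l : ℤ) (m : ℕ) : IsSegment (window s l m) s :=
  isSegment_iff_window.2 ⟨l, by rw [length_window]⟩

lemma IsSegment.of_infix {a b : List A} {s : ℤ → A} (ha : IsSegment a s)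
    (hba : b <:+: a) : IsSegment b s := by
  obtain ⟨x, y, rfl⟩ := hba
  obtain ⟨l, hl⟩ := isSegment_iff_window.1 ha
  exact isSegment_iff_window.2
    ⟨l + x.length, (window_add_eq_append_iff.1 (window_add_eq_append_iff.1 hl).1).2⟩

lemma isSegment_shift_iff {a : List A} {s : ℤ → A} (k : ℤ) :
    IsSegment a (fun i => s (i + k)) ↔ IsSegment a s := by
  simp only [isSegment_iff_window, window_shift]
  exact ⟨fun ⟨l, h⟩ => ⟨l + k, h⟩, fun ⟨l, h⟩ => ⟨l - k, by rwa [sub_add_cancel]⟩⟩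

end Window

section Shift

variable {A : Type}

lemma shft_injective : Injective (shft (α := A)) :=
  fun s t h => funext fun i => by simpa [shft] using congrFun h (i - 1)

lemma shft_mem_iff {S : Set (ℤ → A)} (hS : shft '' S = S) {t : ℤ → A} :
    shft t ∈ S ↔ t ∈ S := by
  nth_rewrite 1 [← hS]
  exact shft_injective.mem_set_image

lemma shift_mem_of_image_shft_eq {S : Set (ℤ → A)} (hS : shft '' S = S) {t : ℤ → A}
    (ht : t ∈ S) (k : ℤ) : (fun i => t (i + k)) ∈ S := by
  induction k using Int.induction_on with
  | zero => simpa using ht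
  | succ k ih =>
    convert (shft_mem_iff hS).2 ih using 1
    funext i
    simp only [shft]
    ring_nf
  | pred k ih =>
    refine (shft_mem_iff hS).1 ?_
    convert ih using 1
    funext i
    simp only [shft]
    ring_nf

lemma image_shft_adh (L : Set (List A)) : shft '' Adh L = Adh L := by
  ext s
  constructor
  · rintro ⟨t, ht, rfl⟩ a ha
    exact ht a ((isSegment_shift_iff 1).1 ha)
  · intro hs
    refine ⟨fun i => s (i + -1), fun a ha => hs a ((isSegment_shift_iff (-1)).1 ha), ?_⟩
    funext i
    simp [shft]

end Shift

section Periodic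

variable {A : Type}

lemma window_add_of_periodic {p : ℤ → A} {c : ℤ} (hp : Periodic p c) (l : ℤ) (m : ℕ) :
    window p (l + c) m = window p l m :=
  window_eq_window_iff.2 fun j _ => by rw [add_right_comm, hp]

lemma window_emod_of_periodic {p : ℤ → A} {n : ℤ} (hp : Periodic p n) (l : ℤ) (m : ℕ) :
    window p (l % n) m = window p l m := by
  have := window_add_of_periodic (hp.int_mul (l / n)) (l % n) m
  rwa [Int.cast_id, mul_comm, Int.emod_add_mul_ediv, eq_comm] at this

lemma Function.Periodic.eq_of_window_eq {p q : ℤ → A} {n : ℕ} (hn : 0 < n)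
    (hp : Periodic p n) (hq : Periodic q n) (h : window p 0 n = window q 0 n) : p = q := by
  funext i
  have hmod : i % n = i - (i / n : ℤ) * n := by rw [Int.emod_def, mul_comm]
  have h0 : 0 ≤ i % n := Int.emod_nonneg i (by omega)
  have hlt : i % n < n := Int.emod_lt_of_pos i (by omega)
  have := window_eq_window_iff.1 h (i % n).toNat (by omega)
  rwa [Int.toNat_of_nonneg h0, zero_add, hmod, ← Int.cast_id (n := i / n), hp.sub_int_mul_eq,
    hq.sub_int_mul_eq] at this

lemma periodize_periodic (a : List A) (ha : a ≠ []) : Periodic (periodize a ha) a.length := by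
  intro i
  simp only [periodize, Int.add_emod_right]

lemma window_periodize (a : List A) (ha : a ≠ []) : window (periodize a ha) 0 a.length = a := by
  conv_rhs => rw [← List.ofFn_get a]
  refine List.ofFn_inj.2 (funext fun j => ?_)
  simp only [periodize, zero_add]
  congr
  rw [Int.emod_eq_of_lt (by omega) (by omega)]
  simp

lemma isSegment_periodize (a : List A) (ha : a ≠ []) : IsSegment a (periodize a ha) :=
  isSegment_iff_window.2 ⟨0, window_periodize a ha⟩

lemma periodize_window {p : ℤ → A} {n : ℕ} (hp : Periodic p n) (l : ℤ)
    (hw : window p l n ≠ []) : periodize (window p l n) hw = fun i => p (i + l) := by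
  have hn : 0 < n := by simpa using List.length_pos_iff.2 hw
  refine Periodic.eq_of_window_eq hn ?_ (hp.add_const l) ?_
  · simpa using periodize_periodic _ hw
  · simpa [window_shift] using window_periodize _ hw

lemma flatten_replicate_eq_window (a : List A) (ha : a ≠ []) (i : ℕ) :
    (List.replicate i a).flatten = window (periodize a ha) 0 (i * a.length) := by
  induction i with
  | zero => simp [window]
  | succ i ih =>
    rw [List.replicate_succ, List.flatten_cons, Nat.succ_mul, add_comm, window_add,
      window_periodize, window_add_of_periodic (periodize_periodic a ha), ih]

lemma window_rotate_of_periodic {p : ℤ → A} {l : ℤ} {u v : List A}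
    (hp : Periodic p (u ++ v).length) (h : window p l (u ++ v).length = u ++ v) :
    window p (l + u.length) (v ++ u).length = v ++ u := by
  obtain ⟨hu, hv⟩ := window_add_eq_append_iff.1 h
  rw [List.length_append, window_add, hv, add_assoc, ← Nat.cast_add, ← List.length_append,
    window_add_of_periodic hp, hu]

lemma isSegment_periodize_iff {a b : List A} (ha : a ≠ []) :
    IsSegment b (periodize a ha) ↔ ∃ i, 0 < i ∧ ∃ u v : List A,
      u ++ v = (List.replicate i a).flatten ∧ b <:+: v ++ u := by
  have hper := periodize_periodic a ha
  have hn : 0 < a.length := List.length_pos_iff.2 ha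
  constructor
  · intro hb
    obtain ⟨l, hl⟩ := isSegment_iff_window.1 hb
    set m := b.length
    set r := (l % a.length).toNat
    have hr : (r : ℤ) = l % a.length := Int.toNat_of_nonneg (Int.emod_nonneg l (by omega))
    have hrn : r < a.length := by have := Int.emod_lt_of_pos l (b := a.length) (by omega); omega
    have hrm : r + m ≤ (m + 1) * a.length := by nlinarith
    refine ⟨m + 1, m.succ_pos, window (periodize a ha) 0 r,
      window (periodize a ha) r ((m + 1) * a.length - r), ?_, ?_⟩
    · rw [flatten_replicate_eq_window a ha]
      conv_rhs => rw [← Nat.add_sub_cancel' (by omega : r ≤ (m + 1) * a.length),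
        window_add, zero_add]
    · rw [← hl, ← window_emod_of_periodic hper, ← hr]
      exact (window_infix _ le_rfl (by omega)).trans (List.infix_append [] _ _)
  · rintro ⟨i, -, u, v, huv, hb⟩
    have hw : window (periodize a ha) 0 (u ++ v).length = u ++ v := by
      rw [huv, flatten_replicate_eq_window a ha, length_window]
    have hp : Periodic (periodize a ha) (u ++ v).length := by
      rw [huv, flatten_replicate_eq_window a ha, length_window]; push_cast
      exact hper.nat_mul i
    exact (isSegment_iff_window.2 ⟨_, window_rotate_of_periodic hp hw⟩).of_infix hb

end Periodic

section Languages

variable {A : Type}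

lemma mem_lc_iff {S : Set (ℤ → A)} {a : List A} (ha : a ≠ []) :
    a ∈ Lc S ↔ periodize a ha ∈ S := by
  refine ⟨fun h => ?_, fun h => .inl ⟨ha, h, a.length, List.length_pos_iff.2 ha,
    periodize_periodic a ha⟩⟩
  obtain ⟨_, hS, _⟩ | rfl := h
  exacts [hS, absurd rfl ha]

lemma mem_cc_iff {L : Set (List A)} {a : List A} (ha : a ≠ []) :
    a ∈ Cc L ↔ ∀ i, 0 < i → ∀ u v : List A,
      u ++ v = (List.replicate i a).flatten → ∃ w ∈ L, v ++ u <:+: w := by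
  change a = [] ∨ _ ↔ _
  rw [or_iff_right ha, and_iff_right ha]
  refine forall₄_congr fun i _ u v => imp_congr_right fun _ => ?_
  exact ⟨fun ⟨x, y, h⟩ => ⟨_, h, x, y, rfl⟩, fun ⟨w, hw, x, y, h⟩ => ⟨x, y, h ▸ hw⟩⟩

theorem lc_adh (L : Set (List A)) : Lc (Adh L) = Cc L := by
  ext a
  rcases eq_or_ne a [] with rfl | ha
  · simp [Lc, Cc]
  rw [mem_lc_iff ha, mem_cc_iff ha]
  constructor
  · intro hp i hi u v huv
    exact hp _ ((isSegment_periodize_iff ha).2 ⟨i, hi, u, v, huv, List.infix_rfl⟩)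
  · intro h b hb
    obtain ⟨i, hi, u, v, huv, hbvu⟩ := (isSegment_periodize_iff ha).1 hb
    obtain ⟨w, hw, hvuw⟩ := h i hi u v huv
    exact ⟨w, hw, hbvu.trans hvuw⟩

lemma mem_ctr_of_isSegment {L : Set (List A)} {s : ℤ → A} {a : List A} (hs : s ∈ Adh L)
    (ha : IsSegment a s) : a ∈ Ctr L := by
  obtain ⟨l, hl⟩ := isSegment_iff_window.1 ha
  intro N _
  obtain ⟨w, hw, p, q, rfl⟩ := hs _ (isSegment_window s (l - N) (N + a.length + N))
  refine ⟨p ++ window s (l - N) N, window s (l + a.length) N ++ q, by simp, by simp, ?_⟩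
  have e : l - N + ((N + a.length : ℕ) : ℤ) = l + a.length := by push_cast; ring
  convert hw using 1
  rw [window_add, window_add, sub_add_cancel, hl, e]
  simp

end Languages

section Topology

variable {A : Type} [TopologicalSpace A]

lemma mem_closure_of_isSegment {T : Set (ℤ → A)} {s : ℤ → A}
    (hT : ∀ t ∈ T, ∀ k : ℤ, (fun i => t (i + k)) ∈ T)
    (h : ∀ b, IsSegment b s → b ≠ [] → ∃ t ∈ T, IsSegment b t) : s ∈ closure T := by
  rw [mem_closure_iff]
  intro U hU hsU
  obtain ⟨I, u, hu, hIU⟩ := isOpen_pi_iff.1 hU s hsU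
  set n := I.sup Int.natAbs
  obtain ⟨t, ht, hseg⟩ := h _ (isSegment_window s (-n) (2 * n + 1))
    (List.ne_nil_of_length_pos (by simp))
  obtain ⟨l, hl⟩ := isSegment_iff_window.1 hseg
  have hagree :
      window (fun i => t (i + (l + n))) (-n) (2 * n + 1) = window s (-n) (2 * n + 1) := by
    rw [window_shift, ← hl, length_window]
    congr 1
    ring
  refine ⟨_, hIU fun i hi => ?_, hT t ht (l + n)⟩
  have hin : i.natAbs ≤ n := Finset.le_sup (f := Int.natAbs) hi
  have := window_eq_window_iff.1 hagree (i + n).toNat (by omega)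
  rw [show -(n : ℤ) + ((i + n).toNat : ℤ) = i by omega] at this
  exact this ▸ (hu i hi).2

variable [DiscreteTopology A]

lemma isClopen_setOf_window (l : ℤ) (m : ℕ) (P : List A → Prop) :
    IsClopen {s : ℤ → A | P (window s l m)} :=
  (isClopen_discrete {g : Fin m → A | P (List.ofFn g)}).preimage
    (continuous_pi fun _ => continuous_apply _)

lemma isClosed_adh (L : Set (List A)) : IsClosed (Adh L) := by
  have : Adh L = ⋂ (l : ℤ) (m : ℕ), {s | ∃ w ∈ L, window s l m <:+: w} := by
    ext s
    simp only [Set.mem_iInter]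
    constructor
    · exact fun h l m => h _ (isSegment_window s l m)
    · intro h a ha
      obtain ⟨l, hl⟩ := isSegment_iff_window.1 ha
      exact hl ▸ h l a.length
  rw [this]
  exact isClosed_iInter fun l => isClosed_iInter fun m =>
    (isClopen_setOf_window l m fun b => ∃ w ∈ L, b <:+: w).isClosed

end Topology

section Subshift

variable {A : Type}

lemma exists_mem_adh_isSegment_of_mem_ctr [Finite A] {L : Set (List A)} {a : List A}
    (ha : a ∈ Ctr L) : ∃ s ∈ Adh L, IsSegment a s := by
  let : TopologicalSpace A := ⊥
  have : DiscreteTopology A := ⟨rfl⟩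
  set C : ℕ → Set (ℤ → A) := fun N => {s | window s 0 a.length = a} ∩
    {s | ∃ w ∈ L, window s (-N) (N + a.length + N) <:+: w}
  have hC_closed (N : ℕ) : IsClosed (C N) :=
    ((isClopen_setOf_window 0 a.length fun b => b = a).inter
      (isClopen_setOf_window _ _ fun b => ∃ w ∈ L, b <:+: w)).isClosed
  have hC_anti (N : ℕ) : C (N + 1) ⊆ C N := fun s ⟨h0, w, hw, hsw⟩ =>
    ⟨h0, w, hw, (window_infix s (by omega) (by omega)).trans hsw⟩
  have hC_nonempty (N : ℕ) : (C N).Nonempty := by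
    obtain ⟨x, y, hx, hy, hw⟩ := ha (N + 1) N.succ_pos
    have hw0 : x ++ a ++ y ≠ [] := List.ne_nil_of_length_pos (by simp; omega)
    -- any sequence through `x ++ a ++ y` will do; a periodization needs no default letter
    set s : ℤ → A := fun i => periodize _ hw0 (i + x.length)
    have hs : window s (-x.length) (x ++ a ++ y).length = x ++ a ++ y := by
      simp only [s, window_shift, neg_add_cancel]
      exact window_periodize _ hw0
    refine ⟨s, ?_, x ++ a ++ y, hw, ?_⟩
    · simpa using (window_add_eq_append_iff.1 (window_add_eq_append_iff.1 hs).1).2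
    · rw [← hs]
      exact window_infix s (by omega) (by simp; omega)
  obtain ⟨s, hs⟩ := IsCompact.nonempty_iInter_of_sequence_nonempty_isCompact_isClosed C
    hC_anti hC_nonempty (hC_closed 0).isCompact hC_closed
  rw [Set.mem_iInter] at hs
  refine ⟨s, fun b hb => ?_, isSegment_iff_window.2 ⟨0, (hs 0).1⟩⟩
  obtain ⟨l, hl⟩ := isSegment_iff_window.1 hb
  obtain ⟨-, w, hw, hsw⟩ := hs (l.natAbs + b.length)
  exact ⟨w, hw, hl ▸ (window_infix s (by omega) (by omega)).trans hsw⟩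

theorem lang_adh [Finite A] (L : Set (List A)) : lang (Adh L) = Ctr L :=
  Set.ext fun _ => ⟨fun ⟨_, hs, ha⟩ => mem_ctr_of_isSegment hs ha,
    exists_mem_adh_isSegment_of_mem_ctr⟩

lemma perSet_subset_adh_lc {S : Set (ℤ → A)} (hS : shft '' S = S) :
    PerSet S ⊆ Adh (Lc S) := by
  rintro p ⟨hpS, k, hk, hp⟩ b hb
  obtain ⟨l, hl⟩ := isSegment_iff_window.1 hb
  have hw : window p l ((b.length + 1) * k) ≠ [] :=
    List.ne_nil_of_length_pos (by simpa using hk)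
  have hbw := window_infix p (l := l) (l' := l) (m := b.length) (m' := (b.length + 1) * k)
    le_rfl (by push_cast; nlinarith)
  rw [hl] at hbw
  refine ⟨_, (mem_lc_iff hw).2 ?_, hbw⟩
  rw [periodize_window (by simpa using (show Periodic p k from hp).nat_mul (b.length + 1))]
  exact shift_mem_of_image_shft_eq hS hpS l

variable [TopologicalSpace A]

theorem adh_lang {S : Set (ℤ → A)} (hS : IsSubshift S) : Adh (lang S) = S := by
  refine subset_antisymm (fun s hs => hS.1.closure_subset ?_)
    fun s hs a ha => ⟨a, ⟨s, hs, ha⟩, List.infix_rfl⟩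
  refine mem_closure_of_isSegment (fun t ht => shift_mem_of_image_shft_eq hS.2 ht)
    fun b hb _ => ?_
  obtain ⟨w, ⟨t, ht, hw⟩, hbw⟩ := hs b hb
  exact ⟨t, ht, hw.of_infix hbw⟩

variable [DiscreteTopology A]

theorem isSubshift_adh (L : Set (List A)) : IsSubshift (Adh L) :=
  ⟨isClosed_adh L, image_shft_adh L⟩

theorem adh_lc_eq_closure_perSet {S : Set (ℤ → A)} (hS : shft '' S = S) :
    Adh (Lc S) = closure (PerSet S) := by
  refine subset_antisymm (fun s hs => ?_)
    (closure_minimal (perSet_subset_adh_lc hS) (isClosed_adh _))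
  refine mem_closure_of_isSegment (fun t ⟨htS, n, hn, ht⟩ k =>
    ⟨shift_mem_of_image_shft_eq hS htS k, n, hn, (show Periodic t n from ht).add_const k⟩)
    fun b hb hb0 => ?_
  obtain ⟨w, hw, hbw⟩ := hs b hb
  have hw0 : w ≠ [] := by
    rintro rfl
    exact hb0 (List.eq_nil_of_infix_nil hbw)
  exact ⟨periodize w hw0, ⟨(mem_lc_iff hw0).1 hw, w.length, List.length_pos_iff.2 hw0,
    periodize_periodic w hw0⟩, (isSegment_periodize w hw0).of_infix hbw⟩

end Subshift

theorem stmt_16_general (A : Type) [Fintype A] [TopologicalSpace A]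
    [DiscreteTopology A] :
    (∀ S : Set (ℤ → A), IsSubshift S →
      Ctr (lang S) = lang S ∧ Adh (lang S) = S) ∧
    (∀ L : Set (List A), Ctr L = L →
      IsSubshift (Adh L) ∧ lang (Adh L) = L) ∧
    (∀ S : Set (ℤ → A), IsCyclicSubshift S →
      Cc (Lc S) = Lc S ∧ Adh (Lc S) = S) ∧
    (∀ L : Set (List A), Cc L = L →
      IsCyclicSubshift (Adh L) ∧ Lc (Adh L) = L) := by
  refine ⟨fun S hS => ⟨by rw [← lang_adh, adh_lang hS], adh_lang hS⟩,
    fun L hL => ⟨isSubshift_adh L, by rw [lang_adh, hL]⟩, fun S hS => ?_, fun L hL => ?_⟩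
  · obtain ⟨⟨hclosed, hshift⟩, hdense⟩ := hS
    have hAdh : Adh (Lc S) = S := (adh_lc_eq_closure_perSet hshift).trans
      (subset_antisymm (closure_minimal (fun _ h => h.1) hclosed) hdense)
    exact ⟨by rw [← lc_adh, hAdh], hAdh⟩
  · have hLc : Lc (Adh L) = L := (lc_adh L).trans hL
    refine ⟨⟨isSubshift_adh L, ?_⟩, hLc⟩
    conv_lhs => rw [← hLc]
    exact (adh_lc_eq_closure_perSet (image_shft_adh L)).subset

/-- `(L, Adh)` is a bijective correspondence between central
languages (`C(L) = L`) and subshifts, and `(L_c, Adh)` is a bijective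
correspondence between cyclic languages (`C_c(L) = L`) and cyclic subshifts. -/
theorem stmt_16 (A : Type) [Fintype A] [Nonempty A] [TopologicalSpace A]
    [DiscreteTopology A] :
    (∀ S : Set (ℤ → A), IsSubshift S →
      Ctr (lang S) = lang S ∧ Adh (lang S) = S) ∧
    (∀ L : Set (List A), Ctr L = L →
      IsSubshift (Adh L) ∧ lang (Adh L) = L) ∧
    (∀ S : Set (ℤ → A), IsCyclicSubshift S →
      Cc (Lc S) = Lc S ∧ Adh (Lc S) = S) ∧
    (∀ L : Set (List A), Cc L = L →
      IsCyclicSubshift (Adh L) ∧ Lc (Adh L) = L) :=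
  stmt_16_general A
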